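/- arXiv:2305.02809 — 3 statements merged into one kernel-verified Lean document; each statement's English description precedes it below -/
import Mathlib

section
/- Let V be a real vector space, F, G : V → V linear maps, v, w ∈ V with F(v) = λ·v and G(w) = γ·w for some λ, γ ∈ ℝ. Suppose that for all ψ, φ, ζ ∈ V*: ζ(w)·(φ(v)·[F,G]*(ψ) − ψ(v)·[F,G]*(φ)) + φ(w)·(ψ(v)·[F,G]*(ζ) − ζ(v)·[F,G]*(ψ)) + ψ(w)·(ζ(v)·[F,G]*(φ) − φ(v)·[F,G]*(ζ)) + (ψ(w)·φ(G(v)) − φ(w)·ψ(G(v)))·F*(ζ) + (ζ(w)·ψ(G(v)) − ψ(w)·ζ(G(v)))·F*(φ) + (φ(w)·ζ(G(v)) − ζ(w)·φ(G(v)))·F*(ψ) + (ψ(v)·φ(F(w)) − φ(v)·ψ(F(w)))·G*(ζ) + (ζ(v)·ψ(F(w)) − ψ(v)·ζ(F(w)))·G*(φ) + (φ(v)·ζ(F(w)) − ζ(v)·φ(F(w)))·G*(ψ) = 0, where [F,G] = F∘G − G∘F. Then for every ε ∈ ℝ, the bracket [ψ,φ]^ε = [ψ,φ]_{F,v} + ε·[ψ,φ]_{G,w}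 satisfies the Jacobi identity, so (V*, [·,·]^ε) is a Lie algebra. -/
/-- The bracket on the dual space `V*` associated with a linear map `T : V → V` and a
vector `u ∈ V`: `[ψ,φ]_{T,u} = φ(u)·T*(ψ) − ψ(u)·T*(φ)`. -/
noncomputable def dualBracket {V : Type*} [AddCommGroup V] [Module ℝ V]
    (T : V →ₗ[ℝ] V) (u : V) (ψ φ : Module.Dual ℝ V) : Module.Dual ℝ V :=
  φ u • T.dualMap ψ - ψ u • T.dualMap φ

/-- The linear combination `[ψ,φ]^ε = [ψ,φ]_{F,v} + ε·[ψ,φ]_{G,w}` of two such brackets. -/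
noncomputable def epsDualBracket {V : Type*} [AddCommGroup V] [Module ℝ V]
    (F G : V →ₗ[ℝ] V) (v w : V) (ε : ℝ) (ψ φ : Module.Dual ℝ V) : Module.Dual ℝ V :=
  dualBracket F v ψ φ + ε • dualBracket G w ψ φ

/-- If `F(v) = λv`, `G(w) = γw` and the compatibility condition
`ι_w ∧ [F,G]* ∧ ι_v + ι_w ∧ ι_{Gv} ∧ F* + ι_v ∧ ι_{Fw} ∧ G* = 0` holds (written out
explicitly), then for every `ε ∈ ℝ` the bracket `[ψ,φ]^ε = [ψ,φ]_{F,v} + ε·[ψ,φ]_{G,w}`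
satisfies the Jacobi identity, so `(V*, [·,·]^ε)` is a Lie algebra. -/
theorem epsDualBracket_jacobi {V : Type*} [AddCommGroup V] [Module ℝ V]
    (F G : V →ₗ[ℝ] V) (v w : V) (lam gam : ℝ)
    (hv : F v = lam • v) (hw : G w = gam • w)
    (hcond : ∀ ψ φ ζ : Module.Dual ℝ V,
      ζ w • (φ v • (F ∘ₗ G - G ∘ₗ F).dualMap ψ - ψ v • (F ∘ₗ G - G ∘ₗ F).dualMap φ) +
        φ w • (ψ v • (F ∘ₗ G - G ∘ₗ F).dualMap ζ - ζ v • (F ∘ₗ G - G ∘ₗ F).dualMap ψ) +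
        ψ w • (ζ v • (F ∘ₗ G - G ∘ₗ F).dualMap φ - φ v • (F ∘ₗ G - G ∘ₗ F).dualMap ζ) +
        (ψ w * φ (G v) - φ w * ψ (G v)) • F.dualMap ζ +
        (ζ w * ψ (G v) - ψ w * ζ (G v)) • F.dualMap φ +
        (φ w * ζ (G v) - ζ w * φ (G v)) • F.dualMap ψ +
        (ψ v * φ (F w) - φ v * ψ (F w)) • G.dualMap ζ +
        (ζ v * ψ (F w) - ψ v * ζ (F w)) • G.dualMap φ +
        (φ v * ζ (F w) - ζ v * φ (F w)) • G.dualMap ψ = 0) :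
    ∀ ε : ℝ, ∀ ψ φ ζ : Module.Dual ℝ V,
      epsDualBracket F G v w ε (epsDualBracket F G v w ε ψ φ) ζ +
        epsDualBracket F G v w ε (epsDualBracket F G v w ε ζ ψ) φ +
        epsDualBracket F G v w ε (epsDualBracket F G v w ε φ ζ) ψ = 0 := by
  intro ε ψ φ ζ
  ext x
  have H := LinearMap.congr_fun (hcond ψ φ ζ) x
  simp only [epsDualBracket, dualBracket, LinearMap.add_apply, LinearMap.sub_apply,
    LinearMap.smul_apply, LinearMap.dualMap_apply, LinearMap.comp_apply, smul_eq_mul,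
    LinearMap.zero_apply, hv, hw, map_smul, map_add, map_sub] at H ⊢
  linear_combination ε * H
end

section
/- Let V be a real vector space, F, G : V → V linear maps, v, w ∈ V with F(v) = λ·v and G(w) = γ·w for some λ, γ ∈ ℝ, ε ∈ ℝ, and define [ψ,φ]^ε = [ψ,φ]_{F,v} + ε·[ψ,φ]_{G,w}. Then for all ψ, φ, ζ ∈ V*, the Jacobiator of [·,·]^ε satisfies: [[ψ,φ]^ε,ζ]^ε + [[ζ,ψ]^ε,φ]^ε + [[φ,ζ]^ε,ψ]^ε = ε·( ζ(w)·(φ(v)·[F,G]*(ψ) − ψ(v)·[F,G]*(φ)) + φ(w)·(ψ(v)·[F,G]*(ζ) − ζ(v)·[F,G]*(ψ)) + ψ(w)·(ζ(v)·[F,G]*(φ) − φ(v)·[F,G]*(ζ)) + (ψ(w)·φ(G(v)) − φ(w)·ψ(G(v)))·F*(ζ) + (ζ(w)·ψ(G(v)) − ψ(w)·ζ(G(v)))·F*(φ) + (φ(w)·ζ(G(v)) − ζ(w)·φ(G(v)))·F*(ψ) + (ψ(v)·φ(F(w)) − φ(v)·ψ(F(w)))·G*(ζ) + (ζ(v)·ψ(F(w))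 − ψ(v)·ζ(F(w)))·G*(φ) + (φ(v)·ζ(F(w)) − ζ(v)·φ(F(w)))·G*(ψ) ), where [F,G] = F∘G − G∘F. -/
/-- If `F(v) = λv` and `G(w) = γw`, the Jacobiator of
`[ψ,φ]^ε = [ψ,φ]_{F,v} + ε·[ψ,φ]_{G,w}` equals `ε` times the explicit expression
involving `[F,G]* = (F∘G − G∘F)*`, `F*`, `G*`, `Gv` and `Fw`. -/
theorem epsDualBracket_jacobiator {V : Type*} [AddCommGroup V] [Module ℝ V]
    (F G : V →ₗ[ℝ] V) (v w : V) (lam gam : ℝ)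
    (hv : F v = lam • v) (hw : G w = gam • w) (ε : ℝ)
    (ψ φ ζ : Module.Dual ℝ V) :
    epsDualBracket F G v w ε (epsDualBracket F G v w ε ψ φ) ζ +
      epsDualBracket F G v w ε (epsDualBracket F G v w ε ζ ψ) φ +
      epsDualBracket F G v w ε (epsDualBracket F G v w ε φ ζ) ψ =
    ε • (ζ w • (φ v • (F ∘ₗ G - G ∘ₗ F).dualMap ψ - ψ v • (F ∘ₗ G - G ∘ₗ F).dualMap φ) +
      φ w • (ψ v • (F ∘ₗ G - G ∘ₗ F).dualMap ζ - ζ v • (F ∘ₗ G - G ∘ₗ F).dualMap ψ) +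
      ψ w • (ζ v • (F ∘ₗ G - G ∘ₗ F).dualMap φ - φ v • (F ∘ₗ G - G ∘ₗ F).dualMap ζ) +
      (ψ w * φ (G v) - φ w * ψ (G v)) • F.dualMap ζ +
      (ζ w * ψ (G v) - ψ w * ζ (G v)) • F.dualMap φ +
      (φ w * ζ (G v) - ζ w * φ (G v)) • F.dualMap ψ +
      (ψ v * φ (F w) - φ v * ψ (F w)) • G.dualMap ζ +
      (ζ v * ψ (F w) - ψ v * ζ (F w)) • G.dualMap φ +
      (φ v * ζ (F w) - ζ v * φ (F w)) • G.dualMap ψ) := by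
  ext x
  simp only [epsDualBracket, dualBracket, LinearMap.add_apply, LinearMap.sub_apply,
    LinearMap.smul_apply, LinearMap.dualMap_apply, LinearMap.comp_apply, map_add, map_sub,
    map_smul, smul_eq_mul, hv, hw]
  ring
end

section
/- Let V be a real vector space and F, G : V → V linear maps, v, w ∈ V, such that: F∘G = G∘F, F(v) = λ·v for some λ ∈ ℝ, G(w) = γ·w for some γ ∈ ℝ, F(w) = 0, and G(v) = 0. Then for every ε ∈ ℝ, the bracket [ψ,φ]^ε = [ψ,φ]_{F,v} + ε·[ψ,φ]_{G,w} satisfies the Jacobi identity, so (V*, [·,·]^ε) is a Lie algebra. -/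
/-- If `F` and `G` commute, `F(v) = λv`, `G(w) = γw`, `F(w) = 0` and `G(v) = 0`, then for
every `ε ∈ ℝ` the bracket `[ψ,φ]^ε = [ψ,φ]_{F,v} + ε·[ψ,φ]_{G,w}` satisfies the Jacobi
identity, so `(V*, [·,·]^ε)` is a Lie algebra. -/
theorem epsDualBracket_jacobi_of_commute {V : Type*} [AddCommGroup V] [Module ℝ V]
    (F G : V →ₗ[ℝ] V) (v w : V) (lam gam : ℝ)
    (hcomm : F ∘ₗ G = G ∘ₗ F)
    (hv : F v = lam • v) (hw : G w = gam • w)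
    (hFw : F w = 0) (hGv : G v = 0) :
    ∀ ε : ℝ, ∀ ψ φ ζ : Module.Dual ℝ V,
      epsDualBracket F G v w ε (epsDualBracket F G v w ε ψ φ) ζ +
        epsDualBracket F G v w ε (epsDualBracket F G v w ε ζ ψ) φ +
        epsDualBracket F G v w ε (epsDualBracket F G v w ε φ ζ) ψ = 0 := by
  intro ε ψ φ ζ
  have hc : ∀ x, F (G x) = G (F x) := fun x => DFunLike.congr_fun hcomm x
  ext x
  simp only [epsDualBracket, dualBracket, LinearMap.add_apply, LinearMap.sub_apply,
    LinearMap.smul_apply, LinearMap.dualMap_apply, LinearMap.zero_apply,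
    map_add, map_sub, map_smul, hv, hw, hFw, hGv, map_zero, smul_eq_mul, hc]
  ring
end
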